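/- Fix ℓ ≥ 1 and a finite alphabet Γ₂ disjoint from {0, 1, inc, dec}. Let L_ℓ be the set of words of the form n_0 o_1 n_1 o_2 n_2 ⋯ o_k n_k (k ≥ 0) where each n_i ∈ {0,1}^ℓ, each o_i ∈ {inc, dec} ∪ Γ₂, and val(n_i) ≡ o_i(val(n_{i-1})) modulo 2^ℓ, where val reads an ℓ-bit string as a binary number with most significant bit first, inc(n)=n+1, dec(n)=n−1, and a(n)=n for a ∈ Γ₂. Then there exist ℓ deterministic finite automata B_1, ..., B_ℓ, each with O(ℓ) states, such that L_ℓ equals the intersection of their languages. -/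

import Mathlib

/-- The alphabet `{0,1} ∪ {inc, dec} ∪ Γ₂`. -/
inductive CtrSym (Γ : Type*) where
  | bit (b : Bool)
  | inc
  | dec
  | letter (g : Γ)
deriving DecidableEq

/-- Value of an `ℓ`-bit string, most significant bit first. -/
def bitsVal (bs : List Bool) : ℤ :=
  bs.foldl (fun acc b => 2 * acc + (if b then 1 else 0)) 0

/-- The operators: `inc` increments, `dec` decrements, letters of `Γ₂` keep
the value unchanged. (`bit` is not an operator.) -/
def CtrSym.isOp {Γ : Type*} : CtrSym Γ → Prop
  | .bit _ => False
  | _ => True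

/-- Application of an operator to a value. -/
def CtrSym.applyOp {Γ : Type*} : CtrSym Γ → ℤ → ℤ
  | .inc, v => v + 1
  | .dec, v => v - 1
  | _, v => v

/-- `ValidSeq ℓ prev l` : the sequence of (operator, ℓ-bit number) pairs `l` is a
valid counting sequence starting from the previous ℓ-bit number `prev`, where each
number is congruent modulo `2^ℓ` to the operator applied to the previous one. -/
def ValidSeq {Γ : Type*} (ℓ : ℕ) : List Bool → List (CtrSym Γ × List Bool) → Prop
  | _, [] => True
  | prev, (o, n) :: rest =>
      o.isOp ∧ n.length = ℓ ∧
      bitsVal n % (2 ^ ℓ : ℤ) = o.applyOp (bitsVal prev) % (2 ^ ℓ : ℤ) ∧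
      ValidSeq ℓ n rest

/-- The language `L_ℓ` of alternating sequences `n₀ o₁ n₁ o₂ n₂ ⋯ o_k n_k` of ℓ-bit
numbers and operators, where each operator applied to the previous number gives
the next number modulo `2^ℓ`. -/
def LCtr (Γ : Type*) (ℓ : ℕ) : Set (List (CtrSym Γ)) :=
  {w | ∃ (n₀ : List Bool) (rest : List (CtrSym Γ × List Bool)),
    n₀.length = ℓ ∧ ValidSeq ℓ n₀ rest ∧
    w = n₀.map CtrSym.bit ++ (rest.map fun p => p.1 :: p.2.map CtrSym.bit).flatten}

namespace CtrAux

def allOnes (l : List Bool) : Bool := l.all id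
def allZeros (l : List Bool) : Bool := l.all fun b => !b

@[simp] lemma allOnes_nil : allOnes [] = true := rfl
@[simp] lemma allZeros_nil : allZeros [] = true := rfl
@[simp] lemma allOnes_cons (b : Bool) (l : List Bool) :
    allOnes (b :: l) = (b && allOnes l) := by simp [allOnes]
@[simp] lemma allZeros_cons (b : Bool) (l : List Bool) :
    allZeros (b :: l) = (!b && allZeros l) := by simp [allZeros]

def incM : List Bool → List Bool
  | [] => []
  | b :: bs => (b != allOnes bs) :: incM bs

def decM : List Bool → List Bool
  | [] => []
  | b :: bs => (b != allZeros bs) :: decM bs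

def opM {Γ : Type*} (o : CtrSym Γ) (a : List Bool) : List Bool :=
  match o with
  | .inc => incM a
  | .dec => decM a
  | _ => a

@[simp] lemma incM_length (a : List Bool) : (incM a).length = a.length := by
  induction a with
  | nil => rfl
  | cons b bs ih => simp [incM, ih]

@[simp] lemma decM_length (a : List Bool) : (decM a).length = a.length := by
  induction a with
  | nil => rfl
  | cons b bs ih => simp [decM, ih]

@[simp] lemma opM_length {Γ : Type*} (o : CtrSym Γ) (a : List Bool) :
    (opM o a).length = a.length := by
  cases o <;> simp [opM]

lemma bitsVal_foldl (bs : List Bool) (x : ℤ) :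
    bs.foldl (fun acc b => 2 * acc + (if b then 1 else 0)) x
      = x * 2 ^ bs.length + bitsVal bs := by
  induction bs generalizing x with
  | nil => simp [bitsVal]
  | cons b t ih =>
    simp only [List.foldl_cons, bitsVal, List.length_cons]
    rw [ih, ih (2 * 0 + _)]
    ring

lemma bitsVal_cons (b : Bool) (bs : List Bool) :
    bitsVal (b :: bs) = (if b then 1 else 0) * 2 ^ bs.length + bitsVal bs := by
  show List.foldl _ (2 * 0 + if b then (1:ℤ) else 0) bs = _
  rw [bitsVal_foldl]
  cases b <;> norm_num

lemma bitsVal_nonneg (bs : List Bool) : 0 ≤ bitsVal bs := by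
  induction bs with
  | nil => simp [bitsVal]
  | cons b t ih =>
    rw [bitsVal_cons]
    have : (0:ℤ) < 2 ^ t.length := by positivity
    cases b <;> simp <;> omega

lemma bitsVal_lt (bs : List Bool) : bitsVal bs < 2 ^ bs.length := by
  induction bs with
  | nil => simp [bitsVal]
  | cons b t ih =>
    rw [bitsVal_cons]
    simp only [List.length_cons, pow_succ]
    have : (0:ℤ) < 2 ^ t.length := by positivity
    cases b <;> simp <;> omega

lemma allOnes_iff (bs : List Bool) : allOnes bs = true ↔ bitsVal bs = 2 ^ bs.length - 1 := by
  induction bs with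
  | nil => simp [bitsVal]
  | cons b t ih =>
    rw [allOnes_cons, bitsVal_cons]
    have h1 := bitsVal_lt t
    have h2 := bitsVal_nonneg t
    have h3 : (0:ℤ) < 2 ^ t.length := by positivity
    simp only [List.length_cons, pow_succ]
    cases b <;> simp [ih] <;> omega

lemma allZeros_iff (bs : List Bool) : allZeros bs = true ↔ bitsVal bs = 0 := by
  induction bs with
  | nil => simp [bitsVal]
  | cons b t ih =>
    rw [allZeros_cons, bitsVal_cons]
    have h1 := bitsVal_lt t
    have h2 := bitsVal_nonneg t
    have h3 : (0:ℤ) < 2 ^ t.length := by positivity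
    cases b <;> simp [ih] <;> omega

lemma neg_one_emod (n : ℤ) (hn : 1 ≤ n) : (-1 : ℤ) % n = n - 1 := by
  have : (-1 : ℤ) = (n - 1) + n * (-1) := by ring
  rw [this, Int.add_mul_emod_self_left, Int.emod_eq_of_lt (by omega) (by omega)]

lemma bitsVal_incM (a : List Bool) :
    bitsVal (incM a) = (bitsVal a + 1) % 2 ^ a.length := by
  induction a with
  | nil => simp [bitsVal, incM]
  | cons b t ih =>
    have h1 := bitsVal_lt t
    have h2 := bitsVal_nonneg t
    have h3 : (0:ℤ) < 2 ^ t.length := by positivity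
    rw [incM] -- unfold one step
    rw [bitsVal_cons, bitsVal_cons, ih]
    simp only [incM_length, List.length_cons, pow_succ]
    by_cases ho : allOnes t = true
    · have hv : bitsVal t = 2 ^ t.length - 1 := (allOnes_iff t).mp ho
      rw [ho, hv]
      cases b
      · simp only [Bool.bne_true, Bool.not_false, if_true, Bool.false_eq_true, if_false]
        rw [show (2:ℤ) ^ t.length - 1 + 1 = 2 ^ t.length by ring, Int.emod_self,
          Int.emod_eq_of_lt (by omega) (by omega)]
        ring
      · simp only [Bool.bne_true, Bool.not_true, Bool.false_eq_true, if_false, if_true]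
        rw [show (2:ℤ) ^ t.length - 1 + 1 = 2 ^ t.length by ring, Int.emod_self,
          show (1:ℤ) * 2 ^ t.length + (2 ^ t.length - 1) + 1 = 2 ^ t.length * 2 by ring,
          Int.emod_self]
        ring
    · have ho' : allOnes t = false := by simpa using ho
      have hv : bitsVal t ≠ 2 ^ t.length - 1 := by
        intro h; exact ho ((allOnes_iff t).mpr h)
      rw [ho']
      rw [Int.emod_eq_of_lt (by omega) (by omega)]
      rw [Int.emod_eq_of_lt]
      · cases b <;> simp <;> ring
      · cases b <;> simp <;> omega
      · cases b <;> simp <;> omega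

lemma bitsVal_decM (a : List Bool) :
    bitsVal (decM a) = (bitsVal a - 1) % 2 ^ a.length := by
  induction a with
  | nil => simp [bitsVal, decM]
  | cons b t ih =>
    have h1 := bitsVal_lt t
    have h2 := bitsVal_nonneg t
    have h3 : (0:ℤ) < 2 ^ t.length := by positivity
    rw [decM, bitsVal_cons, bitsVal_cons, ih]
    simp only [decM_length, List.length_cons, pow_succ]
    by_cases hz : allZeros t = true
    · have hv : bitsVal t = 0 := (allZeros_iff t).mp hz
      rw [hz, hv]
      cases b
      · simp only [Bool.bne_true, Bool.not_false, if_true, Bool.false_eq_true, if_false]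
        rw [show (0:ℤ) - 1 = -1 by ring, neg_one_emod _ (by omega),
          show (0:ℤ) * 2 ^ t.length + 0 - 1 = -1 by ring, neg_one_emod _ (by nlinarith)]
        ring
      · simp only [Bool.bne_true, Bool.not_true, Bool.false_eq_true, if_false, if_true]
        rw [show (0:ℤ) - 1 = -1 by ring, neg_one_emod _ (by omega)]
        rw [Int.emod_eq_of_lt (by omega) (by omega)]
        ring
    · have hz' : allZeros t = false := by simpa using hz
      have hv : bitsVal t ≠ 0 := by
        intro h; exact hz ((allZeros_iff t).mpr h)
      rw [hz']
      rw [Int.emod_eq_of_lt (by omega) (by omega)]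
      rw [Int.emod_eq_of_lt]
      · cases b <;> simp <;> ring
      · cases b <;> simp <;> omega
      · cases b <;> simp <;> omega

lemma bitsVal_inj {a b : List Bool} (h : a.length = b.length)
    (hv : bitsVal a = bitsVal b) : a = b := by
  induction a generalizing b with
  | nil => cases b with
    | nil => rfl
    | cons _ _ => simp at h
  | cons x t ih =>
    cases b with
    | nil => simp at h
    | cons y s =>
      simp only [List.length_cons, Nat.add_right_cancel_iff] at h
      rw [bitsVal_cons, bitsVal_cons, h] at hv
      have h1 := bitsVal_lt t
      have h2 := bitsVal_nonneg t
      have h3 := bitsVal_lt s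
      have h4 := bitsVal_nonneg s
      rw [h] at h1
      have h5 : (0:ℤ) < 2 ^ s.length := by positivity
      have hxy : x = y ∧ bitsVal t = bitsVal s := by
        cases x <;> cases y <;> simp at hv ⊢ <;> omega
      rw [hxy.1, ih h hxy.2]

lemma congr_iff {Γ : Type*} (o : CtrSym Γ) (a n : List Bool) (ℓ : ℕ)
    (ha : a.length = ℓ) (hn : n.length = ℓ) :
    bitsVal n % (2 ^ ℓ : ℤ) = o.applyOp (bitsVal a) % (2 ^ ℓ : ℤ) ↔ n = opM o a := by
  have h1 := bitsVal_lt n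
  have h2 := bitsVal_nonneg n
  rw [hn] at h1
  have hself : bitsVal n % (2 ^ ℓ : ℤ) = bitsVal n := Int.emod_eq_of_lt h2 h1
  have key : CtrSym.applyOp o (bitsVal a) % (2 ^ ℓ : ℤ) = bitsVal (opM o a) := by
    cases o with
    | inc => rw [show CtrSym.applyOp CtrSym.inc (bitsVal a) = bitsVal a + 1 from rfl,
        show opM CtrSym.inc a = incM a from rfl, bitsVal_incM, ha]
    | dec => rw [show CtrSym.applyOp CtrSym.dec (bitsVal a) = bitsVal a - 1 from rfl,
        show opM CtrSym.dec a = decM a from rfl, bitsVal_decM, ha]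
    | bit b =>
      have h3 := bitsVal_lt a
      have h4 := bitsVal_nonneg a
      rw [ha] at h3
      exact Int.emod_eq_of_lt h4 h3
    | letter g =>
      have h3 := bitsVal_lt a
      have h4 := bitsVal_nonneg a
      rw [ha] at h3
      exact Int.emod_eq_of_lt h4 h3
  rw [hself, key]
  constructor
  · intro h
    exact bitsVal_inj (by rw [opM_length, ha, hn]) h
  · intro h; rw [h]

lemma incM_getD (a : List Bool) (i : ℕ) (h : i < a.length) :
    (incM a).getD i false = ((a.getD i false) != allOnes (a.drop (i+1))) := by
  induction a generalizing i with
  | nil => simp at h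
  | cons b bs ih =>
    cases i with
    | zero => simp [incM]
    | succ j =>
      simp only [List.length_cons, Nat.succ_lt_succ_iff] at h
      simpa [incM, List.getD_cons_succ, List.drop_succ_cons] using ih j h

lemma decM_getD (a : List Bool) (i : ℕ) (h : i < a.length) :
    (decM a).getD i false = ((a.getD i false) != allZeros (a.drop (i+1))) := by
  induction a generalizing i with
  | nil => simp at h
  | cons b bs ih =>
    cases i with
    | zero => simp [decM]
    | succ j =>
      simp only [List.length_cons, Nat.succ_lt_succ_iff] at h
      simpa [decM, List.getD_cons_succ, List.drop_succ_cons] using ih j h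

/-- Expected next bit, given operator, previous bit, and all-ones/all-zeros
flags of the lower-significance part of the previous number. -/
def expE {Γ : Type*} (o : CtrSym Γ) (b oo zz : Bool) : Bool :=
  match o with
  | .inc => b != oo
  | .dec => b != zz
  | _ => b

lemma opM_getD {Γ : Type*} (o : CtrSym Γ) (a : List Bool) (i : ℕ) (h : i < a.length) :
    (opM o a).getD i false
      = expE o (a.getD i false) (allOnes (a.drop (i+1))) (allZeros (a.drop (i+1))) := by
  cases o
  · rfl
  · exact incM_getD a i h
  · exact decM_getD a i h
  · rfl

lemma eq_of_getD {a b : List Bool} (h : a.length = b.length)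
    (hg : ∀ i, i < a.length → a.getD i false = b.getD i false) : a = b := by
  apply List.ext_getElem h
  intro i h1 h2
  have := hg i h1
  rwa [List.getD_eq_getElem _ _ h1, List.getD_eq_getElem _ _ h2] at this

/-! ### The machine -/

inductive St where
  | dead
  | first (p : ℕ)
  | mid (p : ℕ) (b o z : Bool)
  | nxt (p : ℕ) (e : Bool)
deriving DecidableEq

/-- Transition function of the `i`-th machine (`i < ℓ`). -/
def tr {Γ : Type*} (i ℓ : ℕ) : St → CtrSym Γ → St
  | .dead, _ => .dead
  | .first p, .bit b =>
      if p < i then .first (p+1) else if p = i then .mid (p+1) b true true else .dead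
  | .first _, _ => .dead
  | .mid p b o z, .bit b' => if p < ℓ then .mid (p+1) b (o && b') (z && !b') else .dead
  | .mid p b o _, .inc => if p = ℓ then .nxt 0 (b != o) else .dead
  | .mid p b _ z, .dec => if p = ℓ then .nxt 0 (b != z) else .dead
  | .mid p b _ _, .letter _ => if p = ℓ then .nxt 0 b else .dead
  | .nxt p e, .bit b =>
      if p < i then .nxt (p+1) e
      else if p = i then (if b = e then .mid (p+1) b true true else .dead) else .dead
  | .nxt _ _, _ => .dead

@[simp] lemma tr_dead {Γ : Type*} (i ℓ : ℕ) (w : List (CtrSym Γ)) :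
    List.foldl (tr i ℓ) .dead w = .dead := by
  induction w with
  | nil => rfl
  | cons c w ih => simpa [tr] using ih

/-- The canonical state of machine `i` after reading a full block `a`. -/
def ms (i ℓ : ℕ) (a : List Bool) : St :=
  .mid ℓ (a.getD i false) (allOnes (a.drop (i+1))) (allZeros (a.drop (i+1)))

lemma run_mid {Γ : Type*} (i ℓ : ℕ) :
    ∀ (t : List Bool) (q : ℕ) (b o z : Bool), q + t.length = ℓ →
      List.foldl (tr (Γ := Γ) i ℓ) (.mid q b o z) (t.map .bit)
        = .mid ℓ b (o && allOnes t) (z && allZeros t) := by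
  intro t
  induction t with
  | nil => intro q b o z hq; simp at hq; simp [hq]
  | cons x t ih =>
    intro q b o z hq
    simp only [List.length_cons] at hq
    have hlt : q < ℓ := by omega
    simp only [List.map_cons, List.foldl_cons, tr, if_pos hlt]
    rw [ih (q+1) b (o && x) (z && !x) (by omega)]
    simp [Bool.and_assoc]

lemma run_first {Γ : Type*} (i ℓ : ℕ) (hi : i < ℓ) :
    ∀ (a : List Bool) (p : ℕ), p + a.length = ℓ → p ≤ i →
      List.foldl (tr (Γ := Γ) i ℓ) (.first p) (a.map .bit)
        = .mid ℓ (a.getD (i-p) false) (allOnes (a.drop (i-p+1))) (allZeros (a.drop (i-p+1))) := by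
  intro a
  induction a with
  | nil => intro p hp hpi; simp only [List.length_nil] at hp; omega
  | cons x t ih =>
    intro p hp hpi
    simp only [List.length_cons] at hp
    simp only [List.map_cons, List.foldl_cons]
    rcases Nat.lt_or_ge p i with hlt | hge
    · rw [show tr (Γ := Γ) i ℓ (.first p) (.bit x) = .first (p+1) by simp [tr, hlt]]
      rw [ih (p+1) (by omega) (by omega)]
      have e1 : i - p = (i - (p+1)) + 1 := by omega
      rw [e1, List.getD_cons_succ, List.drop_succ_cons]
    · have hpe : p = i := by omega
      rw [show tr (Γ := Γ) i ℓ (.first p) (.bit x) = .mid (p+1) x true true by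
        simp [tr, hpe]]
      rw [run_mid i ℓ t (p+1) x true true (by omega)]
      have e1 : i - p = 0 := by omega
      rw [e1]
      simp

lemma run_nxt {Γ : Type*} (i ℓ : ℕ) (hi : i < ℓ) :
    ∀ (a : List Bool) (p : ℕ) (e : Bool), p + a.length = ℓ → p ≤ i →
      List.foldl (tr (Γ := Γ) i ℓ) (.nxt p e) (a.map .bit)
        = if a.getD (i-p) false = e then
            .mid ℓ (a.getD (i-p) false) (allOnes (a.drop (i-p+1))) (allZeros (a.drop (i-p+1)))
          else .dead := by
  intro a
  induction a with
  | nil => intro p e hp hpi; simp only [List.length_nil] at hp; omega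
  | cons x t ih =>
    intro p e hp hpi
    simp only [List.length_cons] at hp
    simp only [List.map_cons, List.foldl_cons]
    rcases Nat.lt_or_ge p i with hlt | hge
    · rw [show tr (Γ := Γ) i ℓ (.nxt p e) (.bit x) = .nxt (p+1) e by simp [tr, hlt]]
      rw [ih (p+1) e (by omega) (by omega)]
      have e1 : i - p = (i - (p+1)) + 1 := by omega
      rw [e1, List.getD_cons_succ, List.drop_succ_cons]
    · have hpe : p = i := by omega
      have e1 : i - p = 0 := by omega
      by_cases hx : x = e
      · rw [show tr (Γ := Γ) i ℓ (.nxt p e) (.bit x) = .mid (p+1) x true true by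
          simp [tr, hpe, hx]]
        rw [run_mid i ℓ t (p+1) x true true (by omega), e1]
        simp [hx]
      · rw [show tr (Γ := Γ) i ℓ (.nxt p e) (.bit x) = .dead by simp [tr, hpe, hx]]
        rw [tr_dead, e1]
        simp [hx]

lemma step_op {Γ : Type*} (i ℓ : ℕ) (o : CtrSym Γ) (ho : o.isOp) (b oo zz : Bool) :
    tr i ℓ (.mid ℓ b oo zz) o = .nxt 0 (expE o b oo zz) := by
  cases o with
  | bit b' => exact absurd ho (by simp [CtrSym.isOp])
  | inc => simp [tr, expE]
  | dec => simp [tr, expE]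
  | letter g => simp [tr, expE]

/-- Forward run over a valid sequence. -/
lemma run_valid {Γ : Type*} (i ℓ : ℕ) (hi : i < ℓ) :
    ∀ (L : List (CtrSym Γ × List Bool)) (a : List Bool), a.length = ℓ → ValidSeq ℓ a L →
      ∃ a' : List Bool, a'.length = ℓ ∧
        List.foldl (tr i ℓ) (ms i ℓ a) ((L.map fun p => p.1 :: p.2.map .bit).flatten)
          = ms i ℓ a' := by
  intro L
  induction L with
  | nil => intro a ha _; exact ⟨a, ha, rfl⟩
  | cons q L ih =>
    obtain ⟨o, n⟩ := q
    intro a ha hv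
    obtain ⟨ho, hn, hcong, hrest⟩ := hv
    have hne : n = opM o a := (congr_iff o a n ℓ ha hn).mp hcong
    simp only [List.map_cons, List.flatten_cons, List.cons_append, List.foldl_cons,
      List.foldl_append]
    rw [show ms i ℓ a = .mid ℓ (a.getD i false) (allOnes (a.drop (i+1))) (allZeros (a.drop (i+1))) from rfl]
    rw [step_op i ℓ o ho]
    rw [run_nxt i ℓ hi n 0 _ (by omega) (by omega)]
    have hget : n.getD (i - 0) false = expE o (a.getD i false) (allOnes (a.drop (i+1)))
        (allZeros (a.drop (i+1))) := by
      rw [Nat.sub_zero, hne, opM_getD o a i (by omega)]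
    rw [if_pos hget]
    have : (St.mid ℓ (n.getD (i-0) false) (allOnes (n.drop (i-0+1))) (allZeros (n.drop (i-0+1))))
        = ms i ℓ n := by rw [Nat.sub_zero]; rfl
    rw [this]
    exact ih n hn hrest

/-! ### Backward extraction (using machine `ℓ-1`) -/

lemma isOp_of_ne_bit {Γ : Type*} (c : CtrSym Γ) (h : ∀ b, c ≠ .bit b) : c.isOp := by
  cases c with
  | bit b => exact absurd rfl (h b)
  | inc => trivial
  | dec => trivial
  | letter g => trivial

lemma extract_nxt {Γ : Type*} (ℓ : ℕ) (hl : 1 ≤ ℓ) :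
    ∀ (w : List (CtrSym Γ)) (p : ℕ) (e b' o' z' : Bool), p ≤ ℓ - 1 →
      List.foldl (tr (ℓ-1) ℓ) (.nxt p e) w = .mid ℓ b' o' z' →
      ∃ (a : List Bool) (w'' : List (CtrSym Γ)) (b : Bool),
        a.length + p = ℓ ∧ w = a.map .bit ++ w'' ∧
        List.foldl (tr (Γ := Γ) (ℓ-1) ℓ) (.nxt p e) (a.map .bit) = .mid ℓ b true true := by
  intro w
  induction w with
  | nil => intro p e b' o' z' hp h; simp at h
  | cons c w ih =>
    intro p e b' o' z' hp h
    simp only [List.foldl_cons] at h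
    cases c with
    | bit x =>
      rcases Nat.lt_or_ge p (ℓ-1) with hlt | hge
      · rw [show tr (Γ := Γ) (ℓ-1) ℓ (.nxt p e) (.bit x) = .nxt (p+1) e by
          simp [tr, hlt]] at h
        obtain ⟨a, w'', b, hlen, hw, hrun⟩ := ih (p+1) e b' o' z' (by omega) h
        refine ⟨x :: a, w'', b, by simp; omega, by simp [hw], ?_⟩
        simp only [List.map_cons, List.foldl_cons]
        rw [show tr (Γ := Γ) (ℓ-1) ℓ (.nxt p e) (.bit x) = .nxt (p+1) e by
          simp [tr, hlt]]
        exact hrun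
      · have hpe : p = ℓ - 1 := by omega
        by_cases hx : x = e
        · rw [show tr (Γ := Γ) (ℓ-1) ℓ (.nxt p e) (.bit x) = .mid (p+1) x true true by
            simp [tr, hpe, hx]] at h
          refine ⟨[x], w, x, by simp; omega, by simp, ?_⟩
          simp only [List.map_cons, List.map_nil, List.foldl_cons, List.foldl_nil]
          rw [show tr (Γ := Γ) (ℓ-1) ℓ (.nxt p e) (.bit x) = .mid (p+1) x true true by
            simp [tr, hpe, hx], show p + 1 = ℓ by omega]
        · rw [show tr (Γ := Γ) (ℓ-1) ℓ (.nxt p e) (.bit x) = .dead by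
            simp [tr, hpe, hx]] at h
          rw [tr_dead] at h
          simp at h
    | inc => rw [show tr (Γ := Γ) (ℓ-1) ℓ (.nxt p e) .inc = .dead from rfl, tr_dead] at h; simp at h
    | dec => rw [show tr (Γ := Γ) (ℓ-1) ℓ (.nxt p e) .dec = .dead from rfl, tr_dead] at h; simp at h
    | letter g =>
      rw [show tr (Γ := Γ) (ℓ-1) ℓ (.nxt p e) (.letter g) = .dead from rfl, tr_dead] at h
      simp at h

lemma extract_first {Γ : Type*} (ℓ : ℕ) (hl : 1 ≤ ℓ) :
    ∀ (w : List (CtrSym Γ)) (p : ℕ) (b' o' z' : Bool), p ≤ ℓ - 1 →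
      List.foldl (tr (ℓ-1) ℓ) (.first p) w = .mid ℓ b' o' z' →
      ∃ (a : List Bool) (w'' : List (CtrSym Γ)) (b : Bool),
        a.length + p = ℓ ∧ w = a.map .bit ++ w'' ∧
        List.foldl (tr (Γ := Γ) (ℓ-1) ℓ) (.first p) (a.map .bit) = .mid ℓ b true true := by
  intro w
  induction w with
  | nil => intro p b' o' z' hp h; simp at h
  | cons c w ih =>
    intro p b' o' z' hp h
    simp only [List.foldl_cons] at h
    cases c with
    | bit x =>
      rcases Nat.lt_or_ge p (ℓ-1) with hlt | hge
      · rw [show tr (Γ := Γ) (ℓ-1) ℓ (.first p) (.bit x) = .first (p+1) by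
          simp [tr, hlt]] at h
        obtain ⟨a, w'', b, hlen, hw, hrun⟩ := ih (p+1) b' o' z' (by omega) h
        refine ⟨x :: a, w'', b, by simp; omega, by simp [hw], ?_⟩
        simp only [List.map_cons, List.foldl_cons]
        rw [show tr (Γ := Γ) (ℓ-1) ℓ (.first p) (.bit x) = .first (p+1) by
          simp [tr, hlt]]
        exact hrun
      · have hpe : p = ℓ - 1 := by omega
        rw [show tr (Γ := Γ) (ℓ-1) ℓ (.first p) (.bit x) = .mid (p+1) x true true by
          simp [tr, hpe]] at h
        refine ⟨[x], w, x, by simp; omega, by simp, ?_⟩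
        simp only [List.map_cons, List.map_nil, List.foldl_cons, List.foldl_nil]
        rw [show tr (Γ := Γ) (ℓ-1) ℓ (.first p) (.bit x) = .mid (p+1) x true true by
          simp [tr, hpe], show p + 1 = ℓ by omega]
    | inc => rw [show tr (Γ := Γ) (ℓ-1) ℓ (.first p) .inc = .dead from rfl, tr_dead] at h; simp at h
    | dec => rw [show tr (Γ := Γ) (ℓ-1) ℓ (.first p) .dec = .dead from rfl, tr_dead] at h; simp at h
    | letter g =>
      rw [show tr (Γ := Γ) (ℓ-1) ℓ (.first p) (.letter g) = .dead from rfl, tr_dead] at h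
      simp at h

lemma extract_blocks {Γ : Type*} (ℓ : ℕ) (hl : 1 ≤ ℓ) :
    ∀ (N : ℕ) (w : List (CtrSym Γ)) (b o z b' o' z' : Bool), w.length ≤ N →
      List.foldl (tr (ℓ-1) ℓ) (.mid ℓ b o z) w = .mid ℓ b' o' z' →
      ∃ L : List (CtrSym Γ × List Bool),
        (∀ q ∈ L, q.1.isOp ∧ q.2.length = ℓ) ∧
        w = (L.map fun p => p.1 :: p.2.map .bit).flatten := by
  intro N
  induction N with
  | zero =>
    intro w b o z b' o' z' hw h
    have : w = [] := List.length_eq_zero_iff.mp (by omega)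
    exact ⟨[], by simp, by simp [this]⟩
  | succ N ih =>
    intro w b o z b' o' z' hw h
    cases w with
    | nil => exact ⟨[], by simp, by simp⟩
    | cons c w' =>
      simp only [List.foldl_cons] at h
      cases c with
      | bit x =>
        rw [show tr (Γ := Γ) (ℓ-1) ℓ (.mid ℓ b o z) (.bit x) = .dead by simp [tr],
          tr_dead] at h
        simp at h
      | inc =>
        rw [show tr (Γ := Γ) (ℓ-1) ℓ (.mid ℓ b o z) .inc = .nxt 0 (b != o) by
          simp [tr]] at h
        obtain ⟨a, w'', bb, hlen, hw', hrun⟩ :=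
          extract_nxt ℓ hl w' 0 (b != o) b' o' z' (by omega) h
        rw [hw', List.foldl_append, hrun] at h
        have hw'' : w''.length ≤ N := by
          have := congrArg List.length hw'
          simp at this
          simp only [List.length_cons] at hw
          omega
        obtain ⟨L, hL, hflat⟩ := ih w'' bb true true b' o' z' hw'' h
        refine ⟨(.inc, a) :: L, ?_, ?_⟩
        · intro q hq
          rcases List.mem_cons.mp hq with h1 | h1
          · subst h1; exact ⟨trivial, show a.length = ℓ by omega⟩
          · exact hL q h1
        · simp [hw', hflat]
      | dec =>
        rw [show tr (Γ := Γ) (ℓ-1) ℓ (.mid ℓ b o z) .dec = .nxt 0 (b != z) by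
          simp [tr]] at h
        obtain ⟨a, w'', bb, hlen, hw', hrun⟩ :=
          extract_nxt ℓ hl w' 0 (b != z) b' o' z' (by omega) h
        rw [hw', List.foldl_append, hrun] at h
        have hw'' : w''.length ≤ N := by
          have := congrArg List.length hw'
          simp at this
          simp only [List.length_cons] at hw
          omega
        obtain ⟨L, hL, hflat⟩ := ih w'' bb true true b' o' z' hw'' h
        refine ⟨(.dec, a) :: L, ?_, ?_⟩
        · intro q hq
          rcases List.mem_cons.mp hq with h1 | h1
          · subst h1; exact ⟨trivial, show a.length = ℓ by omega⟩
          · exact hL q h1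
        · simp [hw', hflat]
      | letter g =>
        rw [show tr (Γ := Γ) (ℓ-1) ℓ (.mid ℓ b o z) (.letter g) = .nxt 0 b by
          simp [tr]] at h
        obtain ⟨a, w'', bb, hlen, hw', hrun⟩ :=
          extract_nxt ℓ hl w' 0 b b' o' z' (by omega) h
        rw [hw', List.foldl_append, hrun] at h
        have hw'' : w''.length ≤ N := by
          have := congrArg List.length hw'
          simp at this
          simp only [List.length_cons] at hw
          omega
        obtain ⟨L, hL, hflat⟩ := ih w'' bb true true b' o' z' hw'' h
        refine ⟨(.letter g, a) :: L, ?_, ?_⟩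
        · intro q hq
          rcases List.mem_cons.mp hq with h1 | h1
          · subst h1; exact ⟨trivial, show a.length = ℓ by omega⟩
          · exact hL q h1
        · simp [hw', hflat]

/-- Combining the runs of all `ℓ` machines over a well-formatted word gives a
valid sequence. -/
lemma valid_of_all {Γ : Type*} (ℓ : ℕ) (hl : 1 ≤ ℓ) :
    ∀ (L : List (CtrSym Γ × List Bool)) (a : List Bool), a.length = ℓ →
      (∀ q ∈ L, q.1.isOp ∧ q.2.length = ℓ) →
      (∀ i, i < ℓ → ∃ b o z, List.foldl (tr i ℓ) (ms i ℓ a)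
          ((L.map fun p => p.1 :: p.2.map .bit).flatten) = .mid ℓ b o z) →
      ValidSeq ℓ a L := by
  intro L
  induction L with
  | nil => intro a _ _ _; trivial
  | cons q L ih =>
    obtain ⟨o, n⟩ := q
    intro a ha hq hrun
    have ho : o.isOp := (hq (o, n) (by simp)).1
    have hn : n.length = ℓ := (hq (o, n) (by simp)).2
    have key : ∀ i, i < ℓ → (n.getD i false = (opM o a).getD i false ∧
        ∃ b' o' z', List.foldl (tr i ℓ) (ms i ℓ n)
          ((L.map fun p => p.1 :: p.2.map .bit).flatten) = .mid ℓ b' o' z') := by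
      intro i hi
      obtain ⟨b, oo, zz, h⟩ := hrun i hi
      simp only [List.map_cons, List.flatten_cons, List.cons_append, List.foldl_cons,
        List.foldl_append] at h
      rw [show ms i ℓ a = .mid ℓ (a.getD i false) (allOnes (a.drop (i+1)))
        (allZeros (a.drop (i+1))) from rfl, step_op i ℓ o ho] at h
      rw [run_nxt i ℓ hi n 0 _ (by omega) (by omega)] at h
      by_cases hx : n.getD (i - 0) false = expE o (a.getD i false) (allOnes (a.drop (i+1)))
          (allZeros (a.drop (i+1)))
      · rw [if_pos hx] at h
        constructor
        · rw [Nat.sub_zero] at hx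
          rw [hx, opM_getD o a i (by omega)]
        · refine ⟨b, oo, zz, ?_⟩
          rw [show ms i ℓ n = .mid ℓ (n.getD i false) (allOnes (n.drop (i+1)))
            (allZeros (n.drop (i+1))) from rfl]
          rw [Nat.sub_zero] at h
          exact h
      · rw [if_neg hx, tr_dead] at h
        simp at h
    have hne : n = opM o a := by
      apply eq_of_getD (by rw [opM_length]; omega)
      intro i hi
      exact (key i (by omega)).1
    refine ⟨ho, hn, (congr_iff o a n ℓ ha hn).mpr hne, ?_⟩
    exact ih n hn (fun q hqq => hq q (by simp [hqq])) (fun i hi => (key i hi).2)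

/-! ### Encoding states into `Fin (64*ℓ)` -/

def good (i ℓ : ℕ) : St → Prop
  | .dead => True
  | .first p => p ≤ i
  | .mid p _ _ _ => i < p ∧ p ≤ ℓ
  | .nxt p _ => p ≤ i

def enc (ℓ : ℕ) : St → ℕ
  | .dead => 0
  | .first p => 1 + p
  | .nxt p e => ℓ + 2 + 2*p + e.toNat
  | .mid p b o z => 3*ℓ + 4 + 8*p + 4*b.toNat + 2*o.toNat + z.toNat

def decSt (i ℓ : ℕ) (x : ℕ) : St :=
  if x = 0 then .dead
  else if x ≤ ℓ + 1 then (if x - 1 ≤ i then .first (x-1) else .dead)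
  else if x ≤ 3*ℓ + 3 then
    (if (x - (ℓ+2))/2 ≤ i then .nxt ((x - (ℓ+2))/2) (decide ((x - (ℓ+2)) % 2 = 1)) else .dead)
  else
    (if i < (x - (3*ℓ+4))/8 ∧ (x - (3*ℓ+4))/8 ≤ ℓ then
       .mid ((x-(3*ℓ+4))/8) (decide ((x-(3*ℓ+4))/4 % 2 = 1)) (decide ((x-(3*ℓ+4))/2 % 2 = 1))
         (decide ((x-(3*ℓ+4)) % 2 = 1))
     else .dead)

lemma enc_lt {i ℓ : ℕ} {s : St} (hs : good i ℓ s) (hi : i < ℓ) : enc ℓ s < 64 * ℓ := by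
  cases s with
  | dead => simp [enc]; omega
  | first p => simp [good] at hs; simp [enc]; omega
  | mid p b o z =>
    obtain ⟨h1, h2⟩ := hs
    have hb := Bool.toNat_lt b
    have ho := Bool.toNat_lt o
    have hz := Bool.toNat_lt z
    simp [enc]; omega
  | nxt p e =>
    simp [good] at hs
    have he := Bool.toNat_lt e
    simp [enc]; omega

lemma good_decSt (i ℓ : ℕ) (x : ℕ) : good i ℓ (decSt i ℓ x) := by
  unfold decSt
  split_ifs with h1 h2 h3 h4 h5 h6 <;> simp_all [good]

lemma decSt_enc {i ℓ : ℕ} {s : St} (hs : good i ℓ s) (hi : i < ℓ) :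
    decSt i ℓ (enc ℓ s) = s := by
  cases s with
  | dead => simp [enc, decSt]
  | first p =>
    simp only [good] at hs
    simp only [enc]; unfold decSt
    rw [if_neg (by omega), if_pos (by omega), if_pos (by omega)]
    congr 1
    omega
  | nxt p e =>
    simp only [good] at hs
    simp only [enc]; unfold decSt
    have he := Bool.toNat_lt e
    rw [if_neg (by omega), if_neg (by omega), if_pos (by omega),
      if_pos (by omega)]
    congr 1
    · omega
    · cases e <;> simp [Bool.toNat] <;> omega
  | mid p b o z =>
    obtain ⟨h1, h2⟩ := hs
    have hb := Bool.toNat_lt b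
    have ho := Bool.toNat_lt o
    have hz := Bool.toNat_lt z
    simp only [enc]; unfold decSt
    rw [if_neg (by omega), if_neg (by omega), if_neg (by omega),
      if_pos (by constructor <;> omega)]
    congr 1
    · omega
    · cases b <;> cases o <;> cases z <;> simp [Bool.toNat] <;> omega
    · cases b <;> cases o <;> cases z <;> simp [Bool.toNat] <;> omega
    · cases b <;> cases o <;> cases z <;> simp [Bool.toNat] <;> omega

lemma tr_good {Γ : Type*} {i ℓ : ℕ} (hi : i < ℓ) (s : St) (c : CtrSym Γ)
    (hs : good i ℓ s) : good i ℓ (tr i ℓ s c) := by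
  cases s with
  | dead => cases c <;> simp [tr, good]
  | first p =>
    cases c with
    | bit b =>
      simp only [tr]
      split_ifs with h1 h2 <;> simp [good] <;> omega
    | inc => simp [tr, good]
    | dec => simp [tr, good]
    | letter g => simp [tr, good]
  | mid p b o z =>
    simp only [good] at hs
    cases c with
    | bit b' =>
      simp only [tr]
      split_ifs with h1 <;> simp [good] <;> omega
    | inc =>
      simp only [tr]
      split_ifs with h1 <;> simp [good] <;> omega
    | dec =>
      simp only [tr]
      split_ifs with h1 <;> simp [good] <;> omega
    | letter g =>
      simp only [tr]
      split_ifs with h1 <;> simp [good] <;> omega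
  | nxt p e =>
    simp only [good] at hs
    cases c with
    | bit b =>
      simp only [tr]
      split_ifs with h1 h2 h3 <;> simp [good] <;> omega
    | inc => simp [tr, good]
    | dec => simp [tr, good]
    | letter g => simp [tr, good]

lemma good_foldl {Γ : Type*} {i ℓ : ℕ} (hi : i < ℓ) (w : List (CtrSym Γ)) (s : St)
    (hs : good i ℓ s) : good i ℓ (List.foldl (tr i ℓ) s w) := by
  induction w generalizing s with
  | nil => exact hs
  | cons c w ih => exact ih _ (tr_good hi s c hs)

/-- The `i`-th DFA. -/
def mach (Γ : Type) (i ℓ : ℕ) (hi : i < ℓ) : DFA (CtrSym Γ) (Fin (64 * ℓ)) where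
  step q c := ⟨enc ℓ (tr i ℓ (decSt i ℓ q.val) c),
    enc_lt (tr_good hi _ c (good_decSt i ℓ q.val)) hi⟩
  start := ⟨enc ℓ (.first 0), enc_lt (show good i ℓ (.first 0) from Nat.zero_le i) hi⟩
  accept := {q | ∃ b o z, decSt i ℓ q.val = .mid ℓ b o z}

lemma mach_evalFrom (Γ : Type) (i ℓ : ℕ) (hi : i < ℓ) (w : List (CtrSym Γ)) :
    ∀ (s : St) (hs : good i ℓ s),
      ((mach Γ i ℓ hi).evalFrom ⟨enc ℓ s, enc_lt hs hi⟩ w).val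
        = enc ℓ (List.foldl (tr i ℓ) s w) := by
  induction w with
  | nil => intro s hs; rfl
  | cons c w ih =>
    intro s hs
    have hstep : (mach Γ i ℓ hi).step ⟨enc ℓ s, enc_lt hs hi⟩ c
        = ⟨enc ℓ (tr i ℓ s c), enc_lt (tr_good hi s c hs) hi⟩ := by
      apply Fin.ext
      simp only [mach, decSt_enc hs hi]
    show ((mach Γ i ℓ hi).evalFrom ((mach Γ i ℓ hi).step _ c) w).val = _
    rw [hstep, ih (tr i ℓ s c) (tr_good hi s c hs)]
    rfl

lemma mach_accepts (Γ : Type) (i ℓ : ℕ) (hi : i < ℓ) (w : List (CtrSym Γ)) :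
    w ∈ (mach Γ i ℓ hi).accepts
      ↔ ∃ b o z, List.foldl (tr i ℓ) (.first 0) w = .mid ℓ b o z := by
  rw [DFA.mem_accepts]
  have h0 : good i ℓ (.first 0) := Nat.zero_le i
  have hval : ((mach Γ i ℓ hi).eval w).val = enc ℓ (List.foldl (tr i ℓ) (.first 0) w) :=
    mach_evalFrom Γ i ℓ hi w (.first 0) h0
  have hgood := good_foldl hi w (.first 0) h0
  constructor
  · rintro ⟨b, o, z, h⟩
    refine ⟨b, o, z, ?_⟩
    rw [hval, decSt_enc hgood hi] at h
    exact h
  · rintro ⟨b, o, z, h⟩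
    refine ⟨b, o, z, ?_⟩
    show decSt i ℓ ((mach Γ i ℓ hi).eval w).val = _
    rw [hval, decSt_enc hgood hi, h]

end CtrAux

/-- there is a constant `c` such that for every `ℓ ≥ 1` and alphabet
`Γ₂`, the language `L_ℓ` is the intersection of the languages of `ℓ` DFAs,
each with at most `c·ℓ` states. -/
theorem exists_dfas_for_counter_language :
    ∃ c : ℕ, ∀ ℓ : ℕ, 1 ≤ ℓ → ∀ Γ : Type,
      ∃ Bs : Fin ℓ → DFA (CtrSym Γ) (Fin (c * ℓ)),
        {w : List (CtrSym Γ) | ∀ i, w ∈ (Bs i).accepts} = LCtr Γ ℓ := by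
  refine ⟨64, fun ℓ hl Γ => ⟨fun i => CtrAux.mach Γ i.val ℓ i.isLt, ?_⟩⟩
  ext w
  simp only [Set.mem_setOf_eq]
  constructor
  · intro h
    have hlt : ℓ - 1 < ℓ := by omega
    obtain ⟨b', o', z', hrun⟩ :=
      (CtrAux.mach_accepts Γ (⟨ℓ-1, hlt⟩ : Fin ℓ).val ℓ (⟨ℓ-1, hlt⟩ : Fin ℓ).isLt w).mp
        (h ⟨ℓ-1, hlt⟩)
    obtain ⟨n₀, w', b0, hlen0, hw, hrun0⟩ :=
      CtrAux.extract_first ℓ hl w 0 b' o' z' (by omega) hrun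
    rw [hw, List.foldl_append, hrun0] at hrun
    obtain ⟨L, hL, hflat⟩ :=
      CtrAux.extract_blocks ℓ hl w'.length w' b0 true true b' o' z' le_rfl hrun
    show w ∈ LCtr Γ ℓ
    refine ⟨n₀, L, by omega, ?_, by rw [hw, hflat]⟩
    apply CtrAux.valid_of_all ℓ hl L n₀ (by omega) hL
    intro i hi
    obtain ⟨b, o, z, hr⟩ := (CtrAux.mach_accepts Γ (⟨i, hi⟩ : Fin ℓ).val ℓ
      (⟨i, hi⟩ : Fin ℓ).isLt w).mp (h ⟨i, hi⟩)
    refine ⟨b, o, z, ?_⟩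
    rw [hw, hflat, List.foldl_append,
      CtrAux.run_first i ℓ hi n₀ 0 (by omega) (by omega)] at hr
    simpa [CtrAux.ms, Nat.sub_zero] using hr
  · rintro ⟨n₀, L, hlen, hval, rfl⟩
    intro i
    rw [CtrAux.mach_accepts]
    obtain ⟨a', ha', hr⟩ := CtrAux.run_valid i.val ℓ i.isLt L n₀ hlen hval
    have key : List.foldl (CtrAux.tr i.val ℓ) (.first 0)
        (n₀.map .bit ++ (L.map fun p => p.1 :: p.2.map .bit).flatten)
          = CtrAux.ms i.val ℓ a' := by
      rw [List.foldl_append,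
        CtrAux.run_first i.val ℓ i.isLt n₀ 0 (by omega) (Nat.zero_le _)]
      simp only [Nat.sub_zero]
      exact hr
    exact ⟨_, _, _, key⟩
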